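/- Assume g is unimodular (μ + a + d = 0) and J is integrable, i.e. r = s = 0, a = d and c = −b (so μ = −2a). Then the following are equivalent: (i) J is harmonic; (ii) bq − ap = 0 and bp + aq = 0; (iii) (a,b) = (0,0) or (p,q) = (0,0) (which is precisely the condition that (J,⟨·,·⟩) is locally conformally Kähler). -/
import Mathlib


open scoped BigOperators
open Matrix

noncomputable section

/-- The underlying 4-dimensional real vector space `ℝ⁴`, whose standard basis plays
the role of the orthonormal basis `e₀, e₁, e₂, e₃`. -/
abbrev G4 := Fin 4 → ℝ

/-- The inner product making the standard basis orthonormal. -/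
def inn4 (x y : G4) : ℝ := ∑ i, x i * y i

/-- The orthogonal almost complex structure with `J e₀ = e₁`, `J e₂ = e₃`. -/
def J4 : Matrix (Fin 4) (Fin 4) ℝ :=
  !![0, -1, 0, 0; 1, 0, 0, 0; 0, 0, 0, -1; 0, 0, 1, 0]

/-- The matrix of `L` on `u = span{e₁,e₂,e₃}` (rows `(μ,r,s), (p,a,b), (q,c,d)`),
extended by `L e₀ = 0`. -/
def L4 (μ r s p a b q c d : ℝ) : Matrix (Fin 4) (Fin 4) ℝ :=
  !![0, 0, 0, 0; 0, μ, r, s; 0, p, a, b; 0, q, c, d]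

/-- The Lie bracket of `g = ℝ e₀ ⋉_L u`. -/
def br4 (L : Matrix (Fin 4) (Fin 4) ℝ) (x y : G4) : G4 :=
  x 0 • L.mulVec y - y 0 • L.mulVec x

/-- `nabla` is the Levi-Civita connection, i.e. satisfies the Koszul formula. -/
def Koszul4 (L : Matrix (Fin 4) (Fin 4) ℝ) (nabla : G4 → G4 → G4) : Prop :=
  ∀ x y z : G4, 2 * inn4 (nabla x y) z
    = inn4 (br4 L x y) z - inn4 (br4 L y z) x + inn4 (br4 L z x) y

/-- `(∇_y J)(x) = ∇_y (Jx) − J ∇_y x`. -/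
def covJ4 (nabla : G4 → G4 → G4) (y x : G4) : G4 :=
  nabla y (J4.mulVec x) - J4.mulVec (nabla y x)

/-- The rough Laplacian `(∇*∇J)(x)`. -/
def roughLap4 (nabla : G4 → G4 → G4) (x : G4) : G4 :=
  ∑ i : Fin 4,
    (nabla (Pi.single i 1) (covJ4 nabla (Pi.single i 1) x)
      - covJ4 nabla (Pi.single i 1) (nabla (Pi.single i 1) x)
      - covJ4 nabla (nabla (Pi.single i 1) (Pi.single i 1)) x)

/-- `J` is harmonic: `J ∘ (∇*∇J) = (∇*∇J) ∘ J`. -/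
def Harmonic4 (nabla : G4 → G4 → G4) : Prop :=
  ∀ x : G4, J4.mulVec (roughLap4 nabla x) = roughLap4 nabla (J4.mulVec x)

/-- The fundamental 2-form `ω(x,y) = ⟨Jx, y⟩`. -/
def om4 (x y : G4) : ℝ := inn4 (J4.mulVec x) y

/-- `(∇_x ω)(y,z)`. -/
def nablaOm4 (nabla : G4 → G4 → G4) (x y z : G4) : ℝ :=
  - om4 (nabla x y) z - om4 y (nabla x z)

/-- `dω(x,y,z)`. -/
def dOm4 (L : Matrix (Fin 4) (Fin 4) ℝ) (x y z : G4) : ℝ :=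
  - om4 (br4 L x y) z - om4 (br4 L y z) x - om4 (br4 L z x) y

/-- The Nijenhuis tensor. -/
def Nij4 (L : Matrix (Fin 4) (Fin 4) ℝ) (x y : G4) : G4 :=
  br4 L x y
    + J4.mulVec (br4 L (J4.mulVec x) y + br4 L x (J4.mulVec y))
    - br4 L (J4.mulVec x) (J4.mulVec y)


noncomputable def Nab (a b p q : ℝ) (x y : G4) : G4 :=
![ q/2*(x 3*y 1 + x 1*y 3) + p/2*(x 2*y 1 + x 1*y 2) + a*(x 3*y 3 + x 2*y 2) - 2*a*(x 1*y 1),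
   -(q/2)*(x 3*y 0 + x 0*y 3) - p/2*(x 2*y 0 + x 0*y 2) + 2*a*(x 1*y 0),
   p/2*(x 0*y 1 - x 1*y 0) + b*(x 0*y 3) - a*(x 2*y 0),
   q/2*(x 0*y 1 - x 1*y 0) - b*(x 0*y 2) - a*(x 3*y 0) ]

lemma inn4_single (w : G4) (i : Fin 4) : inn4 w (Pi.single i 1) = w i := by
  simp [inn4, Pi.single_apply]

lemma Jmul (x : G4) : J4.mulVec x = ![-(x 1), x 0, -(x 3), x 2] := by
  funext i
  fin_cases i <;> simp [J4, Matrix.mulVec, dotProduct, Fin.sum_univ_four]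

lemma single0 : (Pi.single (0:Fin 4) (1:ℝ)) = ![1,0,0,0] := by
  funext j; fin_cases j <;> simp [Pi.single_apply]
lemma single1 : (Pi.single (1:Fin 4) (1:ℝ)) = ![0,1,0,0] := by
  funext j; fin_cases j <;> simp [Pi.single_apply]
lemma single2 : (Pi.single (2:Fin 4) (1:ℝ)) = ![0,0,1,0] := by
  funext j; fin_cases j <;> simp [Pi.single_apply]
lemma single3 : (Pi.single (3:Fin 4) (1:ℝ)) = ![0,0,0,1] := by
  funext j; fin_cases j <;> simp [Pi.single_apply]

set_option maxHeartbeats 1000000 in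
lemma rough_eq (a b p q : ℝ) (x : G4) :
    roughLap4 (Nab a b p q) x =
    ![ (q^2/2 + p^2/2 + 2*a^2)*x 1 + ((-(b*q) + a*p)/2)*x 2 + ((b*p + a*q)/2)*x 3,
       (-(q^2)/2 - p^2/2 - 2*a^2)*x 0 + ((b*p + a*q)/2)*x 2 + ((b*q - a*p)/2)*x 3,
       ((b*q - a*p)/2)*x 0 + ((-(b*p) - a*q)/2)*x 1 + (q^2/2 + p^2/2 + 2*a^2)*x 3,
       ((-(b*p) - a*q)/2)*x 0 + ((-(b*q) + a*p)/2)*x 1 + (-(q^2)/2 - p^2/2 - 2*a^2)*x 2 ] := by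
  funext i
  fin_cases i <;>
  · simp only [roughLap4, covJ4, Fin.sum_univ_four, single0, single1, single2, single3,
      Jmul, Nab, Finset.sum_apply, Pi.sub_apply]
    simp
    ring

set_option maxHeartbeats 1000000 in
lemma harmonic_iff (a b p q : ℝ) :
    Harmonic4 (Nab a b p q) ↔ (b*q - a*p = 0 ∧ b*p + a*q = 0) := by
  constructor
  · intro h
    have H := h ![0,0,1,0]
    simp only [rough_eq, Jmul] at H
    have h0 := congrFun H 0
    have h1 := congrFun H 1
    simp at h0 h1
    constructor <;> linarith
  · rintro ⟨h1, h2⟩ x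
    simp only [rough_eq, Jmul]
    funext i
    fin_cases i
    · simp; linear_combination (-(x 2))*h2 - (x 3)*h1
    · simp; linear_combination (-(x 2))*h1 + (x 3)*h2
    · simp; linear_combination (x 0)*h2 + (x 1)*h1
    · simp; linear_combination (x 0)*h1 - (x 1)*h2

theorem statement18 (μ r s p a b q c d : ℝ) (huni : μ + a + d = 0)
    (hr : r = 0) (hs : s = 0) (hd : d = a) (hc : c = -b)
    (nabla : G4 → G4 → G4) (hK : Koszul4 (L4 μ r s p a b q c d) nabla) :
    (Harmonic4 nabla ↔ (b*q - a*p = 0 ∧ b*p + a*q = 0))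
      ∧ ((b*q - a*p = 0 ∧ b*p + a*q = 0)
        ↔ ((a = 0 ∧ b = 0) ∨ (p = 0 ∧ q = 0))) := by
  subst hr hs hc
  have hd2 : a = d := hd.symm
  subst hd2
  have hmu : μ = -2*a := by linarith
  subst hmu
  have hnab : nabla = Nab a b p q := by
    funext x y
    funext i
    have h := hK x y (Pi.single i 1)
    rw [inn4_single] at h
    fin_cases i <;>
    · simp [br4, L4, inn4, Matrix.mulVec, dotProduct, Fin.sum_univ_four,
        Pi.single_apply, Nab, Matrix.vecHead, Pi.smul_apply, smul_eq_mul] at h ⊢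
      ring_nf at h ⊢
      linarith
  subst hnab
  refine ⟨harmonic_iff a b p q, ?_⟩
  constructor
  · rintro ⟨h1, h2⟩
    by_cases ha : a = 0 ∧ b = 0
    · exact Or.inl ha
    · refine Or.inr ⟨?_, ?_⟩
      · have h3 : (a^2 + b^2) * p = 0 := by linear_combination b*h2 - a*h1
        rcases mul_eq_zero.mp h3 with h4 | h4
        · exact absurd ⟨by nlinarith [sq_nonneg a, sq_nonneg b], by nlinarith [sq_nonneg a, sq_nonneg b]⟩ ha
        · exact h4
      · have h3 : (a^2 + b^2) * q = 0 := by linear_combination a*h2 + b*h1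
        rcases mul_eq_zero.mp h3 with h4 | h4
        · exact absurd ⟨by nlinarith [sq_nonneg a, sq_nonneg b], by nlinarith [sq_nonneg a, sq_nonneg b]⟩ ha
        · exact h4
  · rintro (⟨h1, h2⟩ | ⟨h1, h2⟩) <;> subst h1 <;> subst h2 <;> constructor <;> ring
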